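/- arXiv:1601.08229 — 2 statements merged into one kernel-verified Lean document; each statement's English description precedes it below -/
import Mathlib

section
/- With notation as in the substitution method: if T = Σ_{i=1}^m a_i ⊗ M_i has rank r and M_1 ∈ B ⊗ C has rank 1 (as a matrix), then for every choice of constants λ_2, …, λ_m ∈ ℂ, the tensor T̃ = Σ_{j=2}^m a_j ⊗ (M_j − λ_j M_1) has rank at least r − 1. -/
open scoped BigOperators

/-- A tensor `T`, given by its coordinate array, has rank at most `r`. -/
def tensorRankLE {ιa ιb ιc : Type*} (r : ℕ) (T : ιa → ιb → ιc → ℂ) : Prop :=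
  ∃ (u : Fin r → ιa → ℂ) (v : Fin r → ιb → ℂ) (w : Fin r → ιc → ℂ),
    ∀ i j k, T i j k = ∑ l, u l i * v l j * w l k

/-- The rank of a tensor. -/
noncomputable def tensorRank {ιa ιb ιc : Type*} (T : ιa → ιb → ιc → ℂ) : ℕ :=
  sInf {r | tensorRankLE r T}

/-! Since `M₁ = v ⊗ w` has rank one, `T = T̃ + (a₁ + ∑ⱼ λⱼ aⱼ) ⊗ v ⊗ w`, so every decomposition
of `T̃` extends to a decomposition of `T` with one more simple tensor: `r ≤ rank T̃ + 1`. -/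

namespace Matrix

theorem exists_eq_vecMulVec_of_rank_le_one {K m n : Type*} [Field K] [Fintype n]
    (A : Matrix m n K) (h : A.rank ≤ 1) : ∃ (v : m → K) (w : n → K), A = vecMulVec v w := by
  classical
  obtain ⟨⟨v, _⟩, hv⟩ :=
    finrank_le_one_iff.mp (show Module.finrank K (LinearMap.range A.mulVecLin) ≤ 1 from h)
  have hcol (j : n) : ∃ c : K, c • v = A.col j := by
    obtain ⟨c, hc⟩ := hv ⟨A.col j, Pi.single j 1, A.mulVec_single_one j⟩
    exact ⟨c, congrArg Subtype.val hc⟩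
  choose w hw using hcol
  refine ⟨v, w, Matrix.ext fun i j => ?_⟩
  simpa [vecMulVec_apply, mul_comm] using (congrFun (hw j) i).symm

end Matrix

section TensorRank

variable {ιa ιb ιc : Type*}

theorem tensorRankLE_card_prod [Fintype ιb] [Fintype ιc] (T : ιa → ιb → ιc → ℂ) :
    tensorRankLE (Fintype.card (ιb × ιc)) T := by
  classical
  let e := (Fintype.equivFin (ιb × ιc)).symm
  refine ⟨fun l i => T i (e l).1 (e l).2, fun l => Pi.single (e l).1 1,
    fun l => Pi.single (e l).2 1, fun i j k => ?_⟩
  dsimp only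
  rw [e.sum_comp fun p =>
      T i p.1 p.2 * (Pi.single p.1 1 : ιb → ℂ) j * (Pi.single p.2 1 : ιc → ℂ) k,
    Fintype.sum_prod_type]
  simp [Pi.single_apply]

theorem tensorRankLE_tensorRank [Fintype ιb] [Fintype ιc] (T : ιa → ιb → ιc → ℂ) :
    tensorRankLE (tensorRank T) T :=
  Nat.sInf_mem (s := {r | tensorRankLE r T}) ⟨_, tensorRankLE_card_prod T⟩

theorem tensorRank_le_of_tensorRankLE {r : ℕ} {T : ιa → ιb → ιc → ℂ}
    (h : tensorRankLE r T) : tensorRank T ≤ r :=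
  Nat.sInf_le h

theorem tensorRankLE.add_simple {r : ℕ} {T : ιa → ιb → ιc → ℂ} (h : tensorRankLE r T)
    (x : ιa → ℂ) (y : ιb → ℂ) (z : ιc → ℂ) :
    tensorRankLE (r + 1) (fun i j k => T i j k + x i * y j * z k) := by
  obtain ⟨u, v, w, huvw⟩ := h
  refine ⟨Fin.cons x u, Fin.cons y v, Fin.cons z w, fun i j k => ?_⟩
  simp [Fin.sum_univ_succ, huvw, add_comm]

theorem tensorRank_add_simple_le [Fintype ιb] [Fintype ιc] (T : ιa → ιb → ιc → ℂ)
    (x : ιa → ℂ) (y : ιb → ℂ) (z : ιc → ℂ) :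
    tensorRank (fun i j k => T i j k + x i * y j * z k) ≤ tensorRank T + 1 :=
  tensorRank_le_of_tensorRankLE ((tensorRankLE_tensorRank T).add_simple x y z)

end TensorRank

/-- Substitution method, lower-bound direction: if `T = ∑ aᵢ ⊗ Mᵢ` has rank `r` and the slice
`M₁` has rank `1` as a matrix, then for every choice of constants `λⱼ` the tensor
`T̃ = ∑_{j ≠ 1} aⱼ ⊗ (Mⱼ − λⱼ M₁)` has rank at least `r − 1`. -/
theorem stmt2 (m b c r : ℕ) (hm : 0 < m) (T : Fin m → Fin b → Fin c → ℂ)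
    (hT : tensorRank T = r) (h1 : (Matrix.of (T ⟨0, hm⟩)).rank = 1) :
    ∀ lam : Fin m → ℂ,
      r - 1 ≤ tensorRank
        (fun i j k => if i = ⟨0, hm⟩ then 0 else T i j k - lam i * T ⟨0, hm⟩ j k) := by
  intro lam
  set T' : Fin m → Fin b → Fin c → ℂ :=
    fun i j k => if i = ⟨0, hm⟩ then 0 else T i j k - lam i * T ⟨0, hm⟩ j k with hT'
  obtain ⟨v, w, hM⟩ := Matrix.exists_eq_vecMulVec_of_rank_le_one _ h1.le
  have hslice (j k) : T ⟨0, hm⟩ j k = v j * w k := by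
    simpa [Matrix.vecMulVec_apply] using congrFun (congrFun hM j) k
  let x : Fin m → ℂ := fun i => if i = ⟨0, hm⟩ then 1 else lam i
  have hsplit : T = fun i j k => T' i j k + x i * v j * w k := by
    funext i j k
    simp only [hT', x]
    split_ifs with hi
    · subst hi; simp [hslice]
    · rw [hslice]; ring
  have hle := tensorRank_add_simple_le T' x v w
  rw [← hsplit, hT] at hle
  omega
end

section
/- Let M_⟨n⟩ denote the n×n matrix multiplication tensor and let M_⟨n⟩^red = M_⟨n⟩ − Σ_j x^1_n ⊗ y^n_j ⊗ z^j_1 be the reduced matrix multiplication tensor. Then the border rank of M_⟨n⟩ is at least the border rank of M_⟨n⟩^red plus 1. -/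
/-!
Write `M_⟨n⟩` as a limit of tensors `∑_{l=0}^{k} u_l ⊗ v_l ⊗ w_l` with `k + 1` its border rank,
and pass to a subsequence along which the direction of `u_0` converges to some `x`; pick `p` with
`x p ≠ 0`. Projecting the first factor along the direction of `u_0` onto the hyperplane
`{y | y p = 0}` kills the first summand, and these projections converge to the projection along
`x`, so `M_⟨n⟩ - (x p)⁻¹ x ⊗ M_⟨n⟩(p, ·, ·)` has border rank at most `k`. A permutation symmetry
of `M_⟨n⟩` moves `p` to the index of `x^1_n`, and a one-parameter torus of symmetries then
degenerates `x` to a multiple of `x^1_n`, which turns this tensor into `M_⟨n⟩^red`.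
-/

open scoped BigOperators

/-- `T` has border rank at most `r`. -/
def borderRankLE {ιa ιb ιc : Type*} (r : ℕ) (T : ιa → ιb → ιc → ℂ) : Prop :=
  T ∈ closure {S : ιa → ιb → ιc → ℂ | tensorRankLE r S}

/-- The border rank of a tensor. -/
noncomputable def borderRank {ιa ιb ιc : Type*} (T : ιa → ιb → ιc → ℂ) : ℕ :=
  sInf {r | borderRankLE r T}

/-- The matrix multiplication tensor `M_⟨n⟩ = ∑_{i,j,k} x^i_j ⊗ y^j_k ⊗ z^k_i`, where
`A = U* ⊗ V`, `B = V* ⊗ W`, `C = W* ⊗ U` all have matrix-unit bases indexed by `Fin n × Fin n`. -/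
def matMulTensor (n : ℕ) : (Fin n × Fin n) → (Fin n × Fin n) → (Fin n × Fin n) → ℂ :=
  fun a b c => if a.2 = b.1 ∧ b.2 = c.1 ∧ c.2 = a.1 then 1 else 0

/-- The reduced matrix multiplication tensor
`M_⟨n⟩^red = M_⟨n⟩ − ∑_j x^1_n ⊗ y^n_j ⊗ z^j_1` (indices written 0-based). -/
def matMulRed (n : ℕ) (hn : 0 < n) :
    (Fin n × Fin n) → (Fin n × Fin n) → (Fin n × Fin n) → ℂ :=
  fun a b c =>
    matMulTensor n a b c -
      if a = (⟨0, hn⟩, ⟨n - 1, Nat.sub_lt hn Nat.one_pos⟩) ∧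
          b.1 = ⟨n - 1, Nat.sub_lt hn Nat.one_pos⟩ ∧ b.2 = c.1 ∧ c.2 = ⟨0, hn⟩
      then 1 else 0

open Filter Topology

section General

variable {ιa ιb ιc : Type*}

def scaleReindex {ιa' ιb' ιc' : Type*} (pA : ιa' → ℂ) (pB : ιb' → ℂ) (pC : ιc' → ℂ)
    (ρA : ιa' → ιa) (ρB : ιb' → ιb) (ρC : ιc' → ιc) (T : ιa → ιb → ιc → ℂ) :
    ιa' → ιb' → ιc' → ℂ :=
  fun a b c => pA a * pB b * pC c * T (ρA a) (ρB b) (ρC c)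

/-- Applies to the first factor the projection `y ↦ y - (y p / x p) • x` onto the coordinate
hyperplane `{y | y p = 0}` along `x`. -/
noncomputable def projAlong (x : ιa → ℂ) (p : ιa) (T : ιa → ιb → ιc → ℂ) : ιa → ιb → ιc → ℂ :=
  fun a b c => T a b c - (x p)⁻¹ * x a * T p b c

theorem tensorRankLE.scaleReindex {ιa' ιb' ιc' : Type*} {r : ℕ} {T : ιa → ιb → ιc → ℂ}
    (h : tensorRankLE r T) (pA : ιa' → ℂ) (pB : ιb' → ℂ) (pC : ιc' → ℂ)
    (ρA : ιa' → ιa) (ρB : ιb' → ιb) (ρC : ιc' → ιc) :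
    tensorRankLE r (scaleReindex pA pB pC ρA ρB ρC T) := by
  obtain ⟨u, v, w, huvw⟩ := h
  refine ⟨fun l a => pA a * u l (ρA a), fun l b => pB b * v l (ρB b),
    fun l c => pC c * w l (ρC c), fun a b c => ?_⟩
  simp only [_root_.scaleReindex, huvw, Finset.mul_sum]
  exact Finset.sum_congr rfl fun l _ => by ring

theorem continuous_scaleReindex {ιa' ιb' ιc' : Type*} (pA : ιa' → ℂ) (pB : ιb' → ℂ)
    (pC : ιc' → ℂ) (ρA : ιa' → ιa) (ρB : ιb' → ιb) (ρC : ιc' → ιc) :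
    Continuous (scaleReindex pA pB pC ρA ρB ρC) := by
  unfold scaleReindex
  fun_prop

theorem borderRankLE.scaleReindex {ιa' ιb' ιc' : Type*} {r : ℕ} {T : ιa → ιb → ιc → ℂ}
    (h : borderRankLE r T) (pA : ιa' → ℂ) (pB : ιb' → ℂ) (pC : ιc' → ℂ)
    (ρA : ιa' → ιa) (ρB : ιb' → ιb) (ρC : ιc' → ιc) :
    borderRankLE r (scaleReindex pA pB pC ρA ρB ρC T) :=
  map_mem_closure (continuous_scaleReindex pA pB pC ρA ρB ρC) h
    fun _ hS => hS.scaleReindex pA pB pC ρA ρB ρC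

theorem borderRankLE.of_tendsto {α : Type*} {l : Filter α} [l.NeBot] {r : ℕ}
    {X : α → ιa → ιb → ιc → ℂ} {T : ιa → ιb → ιc → ℂ} (hX : Tendsto X l (𝓝 T))
    (h : ∀ᶠ m in l, borderRankLE r (X m)) : borderRankLE r T :=
  isClosed_closure.mem_of_tendsto hX h

theorem eq_zero_of_borderRankLE_zero {T : ιa → ιb → ιc → ℂ} (h : borderRankLE 0 T) :
    T = 0 := by
  have hzero : {S : ιa → ιb → ιc → ℂ | tensorRankLE 0 S} ⊆ {0} := by
    rintro S ⟨u, v, w, huvw⟩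
    funext a b c
    simpa using huvw a b c
  simpa using closure_mono hzero h

theorem exists_tensorRankLE [Finite ιa] [Finite ιb] (T : ιa → ιb → ιc → ℂ) :
    ∃ r, tensorRankLE r T := by
  classical
  have := Fintype.ofFinite ιa
  have := Fintype.ofFinite ιb
  obtain ⟨r, ⟨e⟩⟩ := Finite.exists_equiv_fin (ιa × ιb)
  refine ⟨r, fun l a => if a = (e.symm l).1 then 1 else 0,
    fun l b => if b = (e.symm l).2 then 1 else 0, fun l c => T (e.symm l).1 (e.symm l).2 c,
    fun a b c => ?_⟩
  rw [← e.sum_comp]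
  simp [Fintype.sum_prod_type, ite_mul]

theorem borderRankLE_borderRank [Finite ιa] [Finite ιb] (T : ιa → ιb → ιc → ℂ) :
    borderRankLE (borderRank T) T :=
  Nat.sInf_mem (s := {r | borderRankLE r T}) <|
    (exists_tensorRankLE T).imp fun _ hr => subset_closure hr

theorem borderRank_ne_zero [Finite ιa] [Finite ιb] {T : ιa → ιb → ιc → ℂ} (hT : T ≠ 0) :
    borderRank T ≠ 0 := fun h =>
  hT <| eq_zero_of_borderRankLE_zero (h ▸ borderRankLE_borderRank T)

theorem scaleReindex_projAlong {ιa' ιb' ιc' : Type*} (pA : ιa' → ℂ) (pB : ιb' → ℂ)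
    (pC : ιc' → ℂ) (ρA : ιa' → ιa) (ρB : ιb' → ιb) (ρC : ιc' → ιc) (x : ιa → ℂ) {p : ιa}
    {p' : ιa'} (hp : ρA p' = p) (hp' : pA p' ≠ 0) (T : ιa → ιb → ιc → ℂ) :
    scaleReindex pA pB pC ρA ρB ρC (projAlong x p T) =
      projAlong (fun a => pA a * x (ρA a)) p' (scaleReindex pA pB pC ρA ρB ρC T) := by
  funext a b c
  simp only [scaleReindex, projAlong, hp, mul_inv, mul_sub]
  field_simp

theorem tensorRankLE_projAlong {k : ℕ} {u : Fin (k + 1) → ιa → ℂ} {v : Fin (k + 1) → ιb → ℂ}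
    {w : Fin (k + 1) → ιc → ℂ} {S : ιa → ιb → ιc → ℂ}
    (hS : ∀ a b c, S a b c = ∑ l, u l a * v l b * w l c) {x : ιa → ℂ} {p : ιa}
    (hux : ∃ t : ℂ, u 0 = t • x) (hxp : x p ≠ 0) : tensorRankLE k (projAlong x p S) := by
  obtain ⟨t, ht⟩ := hux
  refine ⟨fun l a => u l.succ a - (x p)⁻¹ * x a * u l.succ p, fun l => v l.succ,
    fun l => w l.succ, fun a b c => ?_⟩
  have hsum : projAlong x p S a b c =
      ∑ l, (u l a - (x p)⁻¹ * x a * u l p) * v l b * w l c := by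
    simp only [projAlong, hS, Finset.mul_sum, ← Finset.sum_sub_distrib]
    exact Finset.sum_congr rfl fun l _ => by ring
  have hfirst : u 0 a - (x p)⁻¹ * x a * u 0 p = 0 := by
    simp only [ht, Pi.smul_apply, smul_eq_mul]
    field_simp
    ring
  rw [hsum, Fin.sum_univ_succ, hfirst, zero_mul, zero_mul, zero_add]

theorem Filter.Tendsto.projAlong {α : Type*} {l : Filter α} {x : α → ιa → ℂ}
    {S : α → ιa → ιb → ιc → ℂ} {y : ιa → ℂ} {T : ιa → ιb → ιc → ℂ} {p : ιa}
    (hx : Tendsto x l (𝓝 y)) (hS : Tendsto S l (𝓝 T)) (hp : y p ≠ 0) :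
    Tendsto (fun m => _root_.projAlong (x m) p (S m)) l (𝓝 (_root_.projAlong y p T)) := by
  have hS' : ∀ a b c, Tendsto (fun m => S m a b c) l (𝓝 (T a b c)) := fun a b c =>
    ((hS.apply_nhds a).apply_nhds b).apply_nhds c
  refine tendsto_pi_nhds.mpr fun a => tendsto_pi_nhds.mpr fun b => tendsto_pi_nhds.mpr fun c => ?_
  exact (hS' a b c).sub ((((hx.apply_nhds p).inv₀ hp).mul (hx.apply_nhds a)).mul (hS' p b c))

theorem exists_mem_sphere_smul_eq {E : Type*} [NormedAddCommGroup E] [NormedSpace ℂ E]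
    [Nontrivial E] (y : E) : ∃ x ∈ Metric.sphere (0 : E) 1, ∃ t : ℂ, y = t • x := by
  rcases eq_or_ne y 0 with rfl | hy
  · obtain ⟨x, hx⟩ := exists_norm_eq E zero_le_one
    exact ⟨x, mem_sphere_zero_iff_norm.mpr hx, 0, (zero_smul ℂ x).symm⟩
  · refine ⟨(‖y‖⁻¹ : ℂ) • y, by simp [norm_smul, hy], ‖y‖, ?_⟩
    rw [smul_smul, mul_inv_cancel₀ (by simpa using hy), one_smul]

theorem borderRankLE.exists_projAlong [Fintype ιa] [Nonempty ιa] [Finite ιb] [Finite ιc]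
    {k : ℕ} {T : ιa → ιb → ιc → ℂ} (h : borderRankLE (k + 1) T) :
    ∃ x p, x p ≠ 0 ∧ borderRankLE k (projAlong x p T) := by
  obtain ⟨S, hS, hST⟩ := mem_closure_iff_seq_limit.mp h
  choose u v w huvw using hS
  choose x hx t ht using fun m => exists_mem_sphere_smul_eq (u m 0)
  obtain ⟨y, hy, φ, hφ, hxy⟩ := (isCompact_sphere (0 : ιa → ℂ) 1).tendsto_subseq hx
  obtain ⟨p, hp⟩ : ∃ p, y p ≠ 0 := by
    by_contra! hzero
    simp [funext hzero] at hy
  refine ⟨y, p, hp, borderRankLE.of_tendsto (hxy.projAlong (hST.comp hφ.tendsto_atTop) hp) ?_⟩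
  filter_upwards [(hxy.apply_nhds p).eventually_ne hp] with m hm
  exact subset_closure (tensorRankLE_projAlong (huvw (φ m)) ⟨t (φ m), ht (φ m)⟩ hm)

end General

section MatMul

variable {n : ℕ}

/-- The index of `x^1_n`, written 0-based. -/
def corner (hn : 0 < n) : Fin n × Fin n := (⟨0, hn⟩, ⟨n - 1, Nat.sub_lt hn Nat.one_pos⟩)

theorem matMulTensor_ne_zero (hn : 0 < n) : matMulTensor n ≠ 0 := fun h => by
  let z : Fin n × Fin n := (⟨0, hn⟩, ⟨0, hn⟩)
  simpa [matMulTensor, z] using congr_fun₃ h z z z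

theorem matMulRed_eq_projAlong (hn : 0 < n) {c : ℂ} (hc : c ≠ 0) :
    matMulRed n hn = projAlong (Pi.single (corner hn) c) (corner hn) (matMulTensor n) := by
  funext a b c'
  by_cases ha : a = corner hn
  · subst ha
    simp only [matMulRed, projAlong, matMulTensor, corner, Pi.single_eq_same, inv_mul_cancel₀ hc]
    grind
  · have ha' : ¬a = (⟨0, hn⟩, ⟨n - 1, Nat.sub_lt hn Nat.one_pos⟩) := ha
    simp [matMulRed, projAlong, Pi.single_eq_of_ne ha, ha']

section Degeneration

variable (q p : Fin n × Fin n)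

/-! The diagonal matrices `diag(t^[i ≠ q.1])` on `U`, `diag(t^-[j ≠ q.2])` on `V` and the
transpositions `(q.1 p.1)` on `U`, `(q.2 p.2)` on `V` act on `A`, `B`, `C` as below and preserve
`M_⟨n⟩`. As `t → 0`, `torusA q t` tends to the indicator of `q`, while `torusB q t` and
`torusC q t` equal `1` on the support of the slice `M_⟨n⟩(q, ·, ·)`. -/

def torusA (t : ℂ) (a : Fin n × Fin n) : ℂ :=
  (if a.1 = q.1 then 1 else t) * (if a.2 = q.2 then 1 else t)

noncomputable def torusB (t : ℂ) (b : Fin n × Fin n) : ℂ := (if b.1 = q.2 then 1 else t)⁻¹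

noncomputable def torusC (t : ℂ) (c : Fin n × Fin n) : ℂ := (if c.2 = q.1 then 1 else t)⁻¹

def swapA (a : Fin n × Fin n) : Fin n × Fin n := (Equiv.swap q.1 p.1 a.1, Equiv.swap q.2 p.2 a.2)

def swapB (b : Fin n × Fin n) : Fin n × Fin n := (Equiv.swap q.2 p.2 b.1, b.2)

def swapC (c : Fin n × Fin n) : Fin n × Fin n := (c.1, Equiv.swap q.1 p.1 c.2)

theorem scaleReindex_matMulTensor {t : ℂ} (ht : t ≠ 0) :
    scaleReindex (torusA q t) (torusB q t) (torusC q t) (swapA q p) (swapB q p) (swapC q p)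
      (matMulTensor n) = matMulTensor n := by
  funext a b c
  simp only [scaleReindex, torusA, torusB, torusC, swapA, swapB, swapC, matMulTensor,
    EmbeddingLike.apply_eq_iff_eq]
  by_cases h : a.2 = b.1 ∧ b.2 = c.1 ∧ c.2 = a.1
  · obtain ⟨hab, hbc, hca⟩ := h
    simp only [hab, hbc, hca, and_self, if_true, mul_one]
    split_ifs <;> field_simp
  · simp [h]

theorem swapA_self : swapA q p q = p := by
  simp [swapA]

theorem torusA_self (t : ℂ) : torusA q t q = 1 := by
  simp [torusA]

theorem tendsto_torusA_mul (x : Fin n × Fin n → ℂ) :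
    Tendsto (fun t a => torusA q t a * x (swapA q p a)) (𝓝 0) (𝓝 (Pi.single q (x p))) := by
  have hcont : Continuous fun t a => torusA q t a * x (swapA q p a) := by
    refine continuous_pi fun a => ?_
    unfold torusA
    split_ifs <;> fun_prop
  convert hcont.tendsto 0 using 2
  funext a
  by_cases ha : a = q
  · simp [ha, torusA_self, swapA_self]
  · have : a.1 ≠ q.1 ∨ a.2 ≠ q.2 := by
      contrapose! ha
      exact Prod.ext ha.1 ha.2
    rcases this with h | h <;> simp [torusA, ha, h]

end Degeneration

theorem borderRankLE_matMulRed_of_projAlong (hn : 0 < n) {k : ℕ}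
    {x : Fin n × Fin n → ℂ} {p : Fin n × Fin n} (hxp : x p ≠ 0)
    (h : borderRankLE k (projAlong x p (matMulTensor n))) : borderRankLE k (matMulRed n hn) := by
  set q := corner hn
  have hlim := (tendsto_torusA_mul q p x).mono_left (nhdsWithin_le_nhds (s := {0}ᶜ))
  rw [matMulRed_eq_projAlong hn hxp]
  refine borderRankLE.of_tendsto (hlim.projAlong tendsto_const_nhds (by simpa [q])) ?_
  filter_upwards [self_mem_nhdsWithin] with t ht
  rw [← scaleReindex_matMulTensor q p ht,
    ← scaleReindex_projAlong _ _ _ _ _ _ x (swapA_self q p) (by simp [torusA_self])]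
  exact h.scaleReindex _ _ _ _ _ _

end MatMul

/-- `R̲(M_⟨n⟩) ≥ R̲(M_⟨n⟩^red) + 1`. -/
theorem stmt3 (n : ℕ) (hn : 0 < n) :
    borderRank (matMulRed n hn) + 1 ≤ borderRank (matMulTensor n) := by
  obtain ⟨k, hk⟩ := Nat.exists_eq_succ_of_ne_zero (borderRank_ne_zero (matMulTensor_ne_zero hn))
  have hM := borderRankLE_borderRank (matMulTensor n)
  rw [hk] at hM ⊢
  have : Nonempty (Fin n × Fin n) := ⟨corner hn⟩
  obtain ⟨x, p, hxp, hproj⟩ := hM.exists_projAlong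
  exact Nat.succ_le_succ (Nat.sInf_le (borderRankLE_matMulRed_of_projAlong hn hxp hproj))
end
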